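/- arXiv:1705.10658 — 6 statements merged into one kernel-verified Lean document; each statement's English description precedes it below -/
import Mathlib

section
/- Let Q ∈ K⟦x⟧[y] be such that Q|x=0 ≠ 0, and let d', d ∈ ℤ_{≥0} with d' ≤ d. Suppose (f_i, t_i)_{1≤i≤ℓ} is a basic root set of Q to precision d'. For each i, set s_i = val_x(Q(f_i + x^{t_i} y)) and suppose Q_i = Q(f_i + x^{t_i} y)/x^{s_i} admits a basic root set (f_{i,j}, t_{i,j})_{1≤j≤ℓ_i} to precision d − s_i. Then (f_i + f_{i,j}·x^{t_i}, t_i + t_{i,j})_{1≤j≤ℓ_i, 1≤i≤ℓ} is a basic root set of Q to precision d. -/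
/-! A root `g` of `Q` to precision `d` is also one to the coarser precision `d'`, so
`g = f_i + x^{t_i} h` for some `i`. Then `Q(g) = x^{s_i} Q_i(h)`, and `x^d ∣ Q(g)` holds exactly when
`x^{d - s_i} ∣ Q_i(h)`, i.e. when `h = f_{i,j} + x^{t_{i,j}} h'` for some `j`. The same identity
`Q(f_i + x^{t_i}(f_{i,j} + x^{t_{i,j}} y)) = x^{s_i} Q_i(f_{i,j} + x^{t_{i,j}} y)` gives the required
valuation of the composed shifts. -/

open Polynomial PowerSeries

/-- `Q|_{x=0}` : set `x = 0` in every coefficient. -/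
noncomputable def atZero {K : Type*} [Field K] (Q : Polynomial (PowerSeries K)) : Polynomial K :=
  Q.map (PowerSeries.constantCoeff : PowerSeries K →+* K)

/-- `Q(f + x^t y)` : substitute `f + x^t·y` for `y`. -/
noncomputable def shift {K : Type*} [Field K] (Q : Polynomial (PowerSeries K))
    (f : PowerSeries K) (t : ℕ) : Polynomial (PowerSeries K) :=
  Q.comp (Polynomial.C f + Polynomial.C ((PowerSeries.X : PowerSeries K) ^ t) * Polynomial.X)

/-- `roots(Q, d)`: all of `K⟦x⟧` if `d ≤ 0`, else `{f | Q(f) ≡ 0 mod x^d}`. -/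
def seriesRoots {K : Type*} [Field K] (Q : Polynomial (PowerSeries K)) (d : ℤ) :
    Set (PowerSeries K) :=
  {f | 0 < d → (PowerSeries.X : PowerSeries K) ^ d.toNat ∣ Polynomial.eval f Q}

/-- `(F i)ᵢ` is a basic root set of `Q` to precision `d`. -/
def IsBasicRootSet {K : Type*} [Field K] (Q : Polynomial (PowerSeries K)) (d : ℤ)
    {ι : Type} [Fintype ι] (F : ι → Polynomial K × ℕ) : Prop :=
  if 0 < d then
    (∀ i, Polynomial.C ((PowerSeries.X : PowerSeries K) ^ d.toNat) ∣
        shift Q (((F i).1 : Polynomial K) : PowerSeries K) (F i).2) ∧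
    seriesRoots Q d =
      ⋃ i, {g | ∃ h : PowerSeries K,
        g = (((F i).1 : Polynomial K) : PowerSeries K) + (PowerSeries.X : PowerSeries K) ^ (F i).2 * h}
  else Set.range F = {(0, 0)}

/-- the root multiplicity of `(f, t)` in `Q` is `m`. -/
def HasRootMultiplicity {K : Type*} [Field K] (Q : Polynomial (PowerSeries K))
    (f : Polynomial K) (t : ℕ) (m : ℕ) : Prop :=
  ∃ (g : Polynomial K) (c : K) (s : ℕ) (R : Polynomial (PowerSeries K)),
    f = g + Polynomial.C c * Polynomial.X ^ (t - 1) ∧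
    g.degree < ((t - 1 : ℕ) : WithBot ℕ) ∧
    shift Q ((g : Polynomial K) : PowerSeries K) (t - 1)
      = Polynomial.C ((PowerSeries.X : PowerSeries K) ^ s) * R ∧
    atZero R ≠ 0 ∧
    m = (atZero R).rootMultiplicity c

/-- `(F i)ᵢ` is a reduced root set of `Q` to precision `d`. -/
def IsReducedRootSet {K : Type*} [Field K] (Q : Polynomial (PowerSeries K)) (d : ℤ)
    {ι : Type} [Fintype ι] (F : ι → Polynomial K × ℕ) : Prop :=
  IsBasicRootSet Q d F ∧
  (0 < d → ∃ m : ι → ℕ,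
    (∀ i, (F i).1 ≠ 0) ∧
    (∀ i, HasRootMultiplicity Q (F i).1 (F i).2 (m i)) ∧
    (∀ i, 1 ≤ m i) ∧
    (∀ i (s : ℕ) (Qi : Polynomial (PowerSeries K)),
      shift Q (((F i).1 : Polynomial K) : PowerSeries K) (F i).2
        = Polynomial.C ((PowerSeries.X : PowerSeries K) ^ s) * Qi →
      atZero Qi ≠ 0 → (atZero Qi).natDegree ≤ m i) ∧
    (∑ i, m i) ≤ (atZero Q).natDegree)

theorem pow_dvd_pow_mul_iff {α : Type*} [MonoidWithZero α] [IsCancelMulZero α] {x : α}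
    (hx : x ≠ 0) {n s : ℕ} {a : α} : x ^ n ∣ x ^ s * a ↔ x ^ (n - s) ∣ a := by
  rcases le_total n s with h | h
  · rw [Nat.sub_eq_zero_of_le h, pow_zero]
    exact iff_of_true (dvd_mul_of_dvd_left (pow_dvd_pow x h) a) (one_dvd a)
  · obtain ⟨k, rfl⟩ := exists_add_of_le h
    rw [pow_add, Nat.add_sub_cancel_left, mul_dvd_mul_iff_left (pow_ne_zero _ hx)]

section

variable {K : Type*} [Field K]

theorem shift_shift (Q : K⟦X⟧[X]) (f g : K⟦X⟧) (t u : ℕ) :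
    shift (shift Q f t) g u = shift Q (f + PowerSeries.X ^ t * g) (t + u) := by
  rw [shift, shift, shift, comp_assoc]
  congr 1
  simp only [add_comp, mul_comp, C_comp, X_comp, map_add, map_mul, pow_add]
  ring

theorem shift_C_mul (a : K⟦X⟧) (R : K⟦X⟧[X]) (f : K⟦X⟧) (t : ℕ) :
    shift (Polynomial.C a * R) f t = Polynomial.C a * shift R f t := by
  simp [shift, mul_comp]

theorem eval_shift (Q : K⟦X⟧[X]) (f : K⟦X⟧) (t : ℕ) (h : K⟦X⟧) :
    (shift Q f t).eval h = Q.eval (f + PowerSeries.X ^ t * h) := by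
  simp [shift, eval_comp]

/-- `IsBasicRootSet` with the precision `d` read as `d.toNat`; for `d ≤ 0` this replaces the
convention `{(0, 0)}` by the weaker requirement that the translates `f + x^t K⟦x⟧`
cover `K⟦x⟧`. -/
structure IsRootCover (Q : K⟦X⟧[X]) (n : ℕ) {ι : Type} (F : ι → K[X] × ℕ) : Prop where
  dvd_shift : ∀ i, Polynomial.C (PowerSeries.X ^ n) ∣ shift Q ((F i).1 : K⟦X⟧) (F i).2
  dvd_eval_iff : ∀ g, PowerSeries.X ^ n ∣ Q.eval g ↔
    ∃ i, ∃ h : K⟦X⟧, g = ((F i).1 : K⟦X⟧) + PowerSeries.X ^ (F i).2 * h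

theorem IsBasicRootSet.isRootCover {Q : K⟦X⟧[X]} {d : ℤ} {ι : Type} [Fintype ι]
    {F : ι → K[X] × ℕ} (hF : IsBasicRootSet Q d F) : IsRootCover Q d.toNat F := by
  by_cases hd : 0 < d
  · rw [IsBasicRootSet, if_pos hd] at hF
    refine ⟨hF.1, fun g => ?_⟩
    simpa [seriesRoots, hd] using Set.ext_iff.mp hF.2 g
  · rw [IsBasicRootSet, if_neg hd] at hF
    obtain ⟨i, hi⟩ : ((0, 0) : K[X] × ℕ) ∈ Set.range F := hF ▸ rfl
    rw [Int.toNat_eq_zero.mpr (not_lt.mp hd)]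
    exact ⟨fun _ => by simp, fun g => iff_of_true (by simp) ⟨i, g, by simp [hi]⟩⟩

theorem isBasicRootSet_of_isRootCover {Q : K⟦X⟧[X]} {d : ℤ} (hd : 0 < d) {ι : Type}
    [Fintype ι] {F : ι → K[X] × ℕ} (hF : IsRootCover Q d.toNat F) : IsBasicRootSet Q d F := by
  rw [IsBasicRootSet, if_pos hd]
  refine ⟨hF.dvd_shift, Set.ext fun g => ?_⟩
  simp [seriesRoots, hd, hF.dvd_eval_iff]

theorem isBasicRootSet_iff_of_nonpos {Q : K⟦X⟧[X]} {d : ℤ} (hd : d ≤ 0) {ι : Type}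
    [Fintype ι] {F : ι → K[X] × ℕ} : IsBasicRootSet Q d F ↔ Set.range F = {(0, 0)} := by
  rw [IsBasicRootSet, if_neg hd.not_gt]

noncomputable def composeRootSets {ι : Type} {ι' : ι → Type} (F : ι → K[X] × ℕ)
    (G : ∀ i, ι' i → K[X] × ℕ) : (Σ i, ι' i) → K[X] × ℕ :=
  fun p => ((F p.1).1 + (G p.1 p.2).1 * Polynomial.X ^ (F p.1).2, (F p.1).2 + (G p.1 p.2).2)

theorem range_composeRootSets {ι : Type} {ι' : ι → Type} {F : ι → K[X] × ℕ}
    {G : ∀ i, ι' i → K[X] × ℕ} (hF : Set.range F = {(0, 0)})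
    (hG : ∀ i, Set.range (G i) = {(0, 0)}) : Set.range (composeRootSets F G) = {(0, 0)} := by
  have hF' (i : ι) : F i = (0, 0) := hF.subset (Set.mem_range_self i)
  have hG' (i : ι) (j : ι' i) : G i j = (0, 0) := (hG i).subset (Set.mem_range_self j)
  obtain ⟨i, -⟩ : ((0, 0) : K[X] × ℕ) ∈ Set.range F := hF ▸ rfl
  obtain ⟨j, -⟩ : ((0, 0) : K[X] × ℕ) ∈ Set.range (G i) := hG i ▸ rfl
  have : Nonempty (Σ i, ι' i) := ⟨⟨i, j⟩⟩
  rw [Set.range_eq_singleton_iff]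
  rintro ⟨i, j⟩
  simp [composeRootSets, hF' i, hG' i j]

theorem coe_add_mul_X_pow (f g : K[X]) (t u : ℕ) (h : K⟦X⟧) :
    ((f + g * Polynomial.X ^ t : K[X]) : K⟦X⟧) + PowerSeries.X ^ (t + u) * h
      = (f : K⟦X⟧) + PowerSeries.X ^ t * ((g : K⟦X⟧) + PowerSeries.X ^ u * h) := by
  push_cast
  ring

theorem eval_add_X_pow_mul_of_shift_eq {Q R : K⟦X⟧[X]} {f : K[X]} {t s : ℕ}
    (hshift : shift Q (f : K⟦X⟧) t = Polynomial.C (PowerSeries.X ^ s) * R) (h : K⟦X⟧) :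
    Q.eval ((f : K⟦X⟧) + PowerSeries.X ^ t * h) = PowerSeries.X ^ s * R.eval h := by
  rw [← eval_shift, hshift, eval_mul, eval_C]

theorem shift_add_mul_X_pow_of_shift_eq {Q R : K⟦X⟧[X]} {f : K[X]} {t s : ℕ}
    (hshift : shift Q (f : K⟦X⟧) t = Polynomial.C (PowerSeries.X ^ s) * R) (g : K[X])
    (u : ℕ) : shift Q ((f + g * Polynomial.X ^ t : K[X]) : K⟦X⟧) (t + u)
      = Polynomial.C (PowerSeries.X ^ s) * shift R (g : K⟦X⟧) u := by
  have hcoe : ((f + g * Polynomial.X ^ t : K[X]) : K⟦X⟧)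
      = (f : K⟦X⟧) + PowerSeries.X ^ t * (g : K⟦X⟧) := by
    simpa using coe_add_mul_X_pow f g t 0 0
  rw [hcoe, ← shift_shift, hshift, shift_C_mul]

theorem IsRootCover.compose {Q : K⟦X⟧[X]} {n' n : ℕ} {ι : Type} {F : ι → K[X] × ℕ}
    (hF : IsRootCover Q n' F) (hn : n' ≤ n) {s : ι → ℕ} {Qs : ι → K⟦X⟧[X]}
    (hshift : ∀ i, shift Q ((F i).1 : K⟦X⟧) (F i).2
      = Polynomial.C (PowerSeries.X ^ s i) * Qs i)
    {ι' : ι → Type} {G : ∀ i, ι' i → K[X] × ℕ}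
    (hG : ∀ i, IsRootCover (Qs i) (n - s i) (G i)) :
    IsRootCover Q n (composeRootSets F G) := by
  have hC : (Polynomial.C PowerSeries.X : K⟦X⟧[X]) ≠ 0 := C_ne_zero.mpr PowerSeries.X_ne_zero
  constructor
  · rintro ⟨i, j⟩
    rw [composeRootSets, shift_add_mul_X_pow_of_shift_eq (hshift i), map_pow, map_pow,
      pow_dvd_pow_mul_iff hC, ← map_pow]
    exact (hG i).dvd_shift j
  · intro g
    constructor
    · intro hg
      obtain ⟨i, h, rfl⟩ := (hF.dvd_eval_iff g).mp ((pow_dvd_pow _ hn).trans hg)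
      rw [eval_add_X_pow_mul_of_shift_eq (hshift i), pow_dvd_pow_mul_iff PowerSeries.X_ne_zero,
        (hG i).dvd_eval_iff] at hg
      obtain ⟨j, h', rfl⟩ := hg
      exact ⟨⟨i, j⟩, h', (coe_add_mul_X_pow _ _ _ _ _).symm⟩
    · rintro ⟨⟨i, j⟩, h, rfl⟩
      rw [composeRootSets, coe_add_mul_X_pow, eval_add_X_pow_mul_of_shift_eq (hshift i),
        pow_dvd_pow_mul_iff PowerSeries.X_ne_zero, (hG i).dvd_eval_iff]
      exact ⟨j, h, rfl⟩

end

theorem basic_root_set_composition_general {K : Type*} [Field K]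
    (Q : Polynomial (PowerSeries K))
    (d' d : ℤ) (hdd : d' ≤ d)
    (ℓ : ℕ) (F : Fin ℓ → Polynomial K × ℕ)
    (hF : IsBasicRootSet Q d' F)
    (s : Fin ℓ → ℕ) (Qs : Fin ℓ → Polynomial (PowerSeries K))
    (hshift : ∀ i, shift Q (((F i).1 : Polynomial K) : PowerSeries K) (F i).2
      = Polynomial.C ((PowerSeries.X : PowerSeries K) ^ s i) * Qs i)
    (ℓ' : Fin ℓ → ℕ) (G : ∀ i, Fin (ℓ' i) → Polynomial K × ℕ)
    (hG : ∀ i, IsBasicRootSet (Qs i) (d - (s i : ℤ)) (G i)) :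
    IsBasicRootSet Q d
      (fun p : Σ i : Fin ℓ, Fin (ℓ' i) =>
        ((F p.1).1 + (G p.1 p.2).1 * Polynomial.X ^ (F p.1).2,
         (F p.1).2 + (G p.1 p.2).2)) := by
  rcases le_or_gt d 0 with hd | hd
  · exact (isBasicRootSet_iff_of_nonpos hd).mpr <| range_composeRootSets
      ((isBasicRootSet_iff_of_nonpos (hdd.trans hd)).mp hF)
      fun i => (isBasicRootSet_iff_of_nonpos (by omega)).mp (hG i)
  · have hG' (i : Fin ℓ) : IsRootCover (Qs i) (d.toNat - s i) (G i) := by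
      simpa only [show (d - (s i : ℤ)).toNat = d.toNat - s i by omega] using (hG i).isRootCover
    exact isBasicRootSet_of_isRootCover hd (hF.isRootCover.compose (by omega) hshift hG')

/-- composition of basic root sets. -/
theorem basic_root_set_composition {K : Type*} [Field K]
    (Q : Polynomial (PowerSeries K)) (h0 : atZero Q ≠ 0)
    (d' d : ℤ) (hd' : 0 ≤ d') (hdd : d' ≤ d)
    (ℓ : ℕ) (F : Fin ℓ → Polynomial K × ℕ)
    (hF : IsBasicRootSet Q d' F)
    (s : Fin ℓ → ℕ) (Qs : Fin ℓ → Polynomial (PowerSeries K))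
    (hshift : ∀ i, shift Q (((F i).1 : Polynomial K) : PowerSeries K) (F i).2
      = Polynomial.C ((PowerSeries.X : PowerSeries K) ^ s i) * Qs i)
    (hval : ∀ i, atZero (Qs i) ≠ 0)
    (ℓ' : Fin ℓ → ℕ) (G : ∀ i, Fin (ℓ' i) → Polynomial K × ℕ)
    (hG : ∀ i, IsBasicRootSet (Qs i) (d - (s i : ℤ)) (G i)) :
    IsBasicRootSet Q d
      (fun p : Σ i : Fin ℓ, Fin (ℓ' i) =>
        ((F p.1).1 + (G p.1 p.2).1 * Polynomial.X ^ (F p.1).2,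
         (F p.1).2 + (G p.1 p.2).2)) :=
  basic_root_set_composition_general Q d' d hdd ℓ F hF s Qs hshift ℓ' G hG
end

section
/- Let Q ∈ K⟦x⟧[y] be such that Q|x=0 ≠ 0. Then there exist unique A, B ∈ K⟦x⟧[y] such that Q = A·B, A is monic, and B|x=0 is a nonzero constant of K. -/
open Polynomial PowerSeries

/-!
Write `Q = ∑ₖ qₖ xᵏ` with `qₖ ∈ K[y]`. Dividing by the leading coefficient `c` of `q₀ = Q|x=0`,
we may assume `q₀` monic and look for `A = ∑ aₖ xᵏ` monic and `B = ∑ bₖ xᵏ` with `b₀ = 1`.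
Then `a₀ = q₀`, `deg aₖ < deg q₀` for `k > 0`, and comparing `xᵏ`-coefficients in `Q = A·B` gives
`aₖ + q₀·bₖ = qₖ - ∑_{0<i<k} aᵢ·bₖ₋ᵢ`, so `aₖ` and `bₖ` are forced to be the remainder and the
quotient of the right-hand side by the monic `q₀`. This determines `A` and `B` recursively, and
`deg bₖ ≤ deg Q - deg q₀` for all `k`, so `B` is again a polynomial in `y`.
-/

namespace Polynomial

theorem Monic.eq_zero_of_add_mul_eq_zero {R : Type*} [Ring R] {g r s : R[X]}
    (hg : g.Monic) (hr : r.degree < g.natDegree) (h : r + g * s = 0) : r = 0 ∧ s = 0 := by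
  nontriviality R
  rw [← degree_eq_natDegree hg.ne_zero] at hr
  simpa [eq_comm] using (div_modByMonic_unique s r hg ⟨h, hr⟩).symm

section SwapVar

variable {R : Type*} [CommSemiring R]

noncomputable def swapVar : R⟦X⟧[X] →+* R[X]⟦X⟧ :=
  eval₂RingHom (PowerSeries.map C) (PowerSeries.C X)

theorem coeff_coeff_swapVar (Q : R⟦X⟧[X]) (k j : ℕ) :
    (PowerSeries.coeff k (swapVar Q)).coeff j = PowerSeries.coeff k (Q.coeff j) := by
  induction Q using Polynomial.induction_on' with
  | add p q hp hq => simp [hp, hq]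
  | monomial i a =>
    simp only [swapVar, coe_eval₂RingHom, eval₂_monomial, ← map_pow, PowerSeries.coeff_mul_C,
      PowerSeries.coeff_map, coeff_C_mul, coeff_X_pow, coeff_monomial]
    split_ifs <;> simp_all

theorem swapVar_injective : Function.Injective (swapVar : R⟦X⟧[X] → R[X]⟦X⟧) := by
  intro P Q h
  ext j k
  rw [← coeff_coeff_swapVar, ← coeff_coeff_swapVar, h]

theorem constantCoeff_swapVar (Q : R⟦X⟧[X]) :
    PowerSeries.constantCoeff (swapVar Q) = Q.map PowerSeries.constantCoeff := by
  ext j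
  rw [← PowerSeries.coeff_zero_eq_constantCoeff_apply, coeff_coeff_swapVar, coeff_map,
    PowerSeries.coeff_zero_eq_constantCoeff_apply]

theorem natDegree_coeff_swapVar_le (Q : R⟦X⟧[X]) (k : ℕ) :
    (PowerSeries.coeff k (swapVar Q)).natDegree ≤ Q.natDegree :=
  natDegree_le_iff_coeff_eq_zero.2 fun j hj => by
    rw [coeff_coeff_swapVar, coeff_eq_zero_of_natDegree_lt hj, map_zero]

theorem exists_swapVar_eq {f : R[X]⟦X⟧} {N : ℕ}
    (hf : ∀ k, (PowerSeries.coeff k f).natDegree ≤ N) :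
    ∃ Q : R⟦X⟧[X], swapVar Q = f ∧ Q.natDegree ≤ N := by
  refine ⟨∑ j ∈ Finset.range (N + 1),
    monomial j (PowerSeries.mk fun k => (PowerSeries.coeff k f).coeff j), ?_, ?_⟩
  · ext k j
    rw [coeff_coeff_swapVar, finsetSum_coeff]
    simp only [coeff_monomial, apply_ite (PowerSeries.coeff k), map_zero,
      PowerSeries.coeff_mk, Finset.sum_ite_eq', Finset.mem_range]
    split_ifs with hj
    · rfl
    · exact (coeff_eq_zero_of_natDegree_lt ((hf k).trans_lt (by omega))).symm
  · exact natDegree_sum_le_of_forall_le _ _ fun j hj =>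
      (natDegree_monomial_le _).trans (Nat.lt_succ_iff.1 (Finset.mem_range.1 hj))

end SwapVar

end Polynomial

namespace PowerSeries

section CommSemiring

variable {R : Type*} [CommSemiring R]

theorem coeff_succ_mul (f g : R⟦X⟧) (k : ℕ) :
    coeff (k + 1) (f * g) = coeff (k + 1) f * constantCoeff g + constantCoeff f * coeff (k + 1) g
      + coeff (k + 1) ((trunc (k + 1) f : R⟦X⟧) * (trunc (k + 1) g : R⟦X⟧)) := by
  conv_lhs => rw [eq_X_pow_mul_shift_add_trunc (k + 1) f, eq_X_pow_mul_shift_add_trunc (k + 1) g]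
  simp [add_mul, mul_add, coeff_X_pow_mul', mul_assoc, mul_left_comm _ (X ^ (k + 1)), coeff_trunc,
    mul_comm, add_assoc, add_left_comm]

theorem coeff_eq_ite_of_coeff_succ {F : ℕ → R⟦X⟧} (h0 : ∀ i, coeff (i + 1) (F 0) = 0)
    (hF : ∀ k i, i ≠ k + 1 → coeff i (F (k + 1)) = coeff i (F k)) (i k : ℕ) :
    coeff i (F k) = if i ≤ k then coeff i (F i) else 0 := by
  induction k with
  | zero => rcases i with _ | i <;> simp [h0]
  | succ k ih =>
    by_cases hi : i = k + 1
    · simp [hi]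
    · rw [hF k i hi, ih]
      simp only [show i ≤ k ↔ i ≤ k + 1 by omega]

theorem eq_zero_of_forall_X_pow_dvd {f : R⟦X⟧} (hf : ∀ k, X ^ k ∣ f) : f = 0 :=
  ext fun k => X_pow_dvd_iff.1 (hf (k + 1)) k k.lt_succ_self

theorem natDegree_coeff_mul_le {f g : R[X]⟦X⟧} {m n : ℕ} (hf : ∀ i, (coeff i f).natDegree ≤ m)
    (hg : ∀ i, (coeff i g).natDegree ≤ n) (k : ℕ) : (coeff k (f * g)).natDegree ≤ m + n := by
  rw [coeff_mul]
  exact natDegree_sum_le_of_forall_le _ _ fun _ _ =>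
    natDegree_mul_le.trans (add_le_add (hf _) (hg _))

end CommSemiring

variable {R : Type*} [CommRing R]

/-- For monic `g`, this says that `a = swapVar A` for a monic `A` with `A|x=0 = g`. -/
def IsMonicLift (g : R[X]) (a : R[X]⟦X⟧) : Prop :=
  constantCoeff a = g ∧ ∀ k, (coeff (k + 1) a).degree < g.natDegree

theorem IsMonicLift.natDegree_coeff_le {g : R[X]} {a : R[X]⟦X⟧} (ha : IsMonicLift g a) (k : ℕ) :
    (coeff k a).natDegree ≤ g.natDegree := by
  rcases k with _ | k
  · rw [coeff_zero_eq_constantCoeff_apply, ha.1]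
  · exact natDegree_le_of_degree_le (ha.2 k).le

theorem IsMonicLift.eq_of_mul_eq {g : R[X]} {a a' b b' : R[X]⟦X⟧} (hg : g.Monic)
    (ha : IsMonicLift g a) (ha' : IsMonicLift g a') (hb : constantCoeff b = 1)
    (h : a * b = a' * b') : a = a' ∧ b = b' := by
  have hdvd : ∀ k, X ^ k ∣ a - a' ∧ X ^ k ∣ b - b' := by
    intro k
    induction k with
    | zero => simp
    | succ k ih =>
      obtain ⟨⟨d, hd⟩, ⟨e, he⟩⟩ := ih
      have hde : d * b + a' * e = 0 :=
        X_pow_mul_cancel (k := k) (by linear_combination h - b * hd - a' * he)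
      have hdeg : (constantCoeff d).degree < g.natDegree := by
        have hd_coeff : coeff k (a - a') = constantCoeff d := by
          rw [hd, coeff_X_pow_mul', if_pos le_rfl, Nat.sub_self, coeff_zero_eq_constantCoeff_apply]
        rw [← hd_coeff, map_sub]
        rcases k with _ | k
        · simp [ha.1, ha'.1]
        · exact (degree_sub_le _ _).trans_lt (max_lt (ha.2 k) (ha'.2 k))
      have hde₀ := congrArg constantCoeff hde
      rw [map_add, map_mul, map_mul, hb, mul_one, ha'.1, map_zero] at hde₀
      obtain ⟨hd₀, he₀⟩ := hg.eq_zero_of_add_mul_eq_zero hdeg hde₀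
      rw [pow_succ, hd, he]
      exact ⟨mul_dvd_mul_left _ (X_dvd_iff.2 hd₀), mul_dvd_mul_left _ (X_dvd_iff.2 he₀)⟩
  exact ⟨sub_eq_zero.1 (eq_zero_of_forall_X_pow_dvd fun k => (hdvd k).1),
    sub_eq_zero.1 (eq_zero_of_forall_X_pow_dvd fun k => (hdvd k).2)⟩

noncomputable def liftApprox (q : R[X]⟦X⟧) : ℕ → R[X]⟦X⟧ × R[X]⟦X⟧
  | 0 => (C (constantCoeff q), 1)
  | k + 1 =>
    let S := coeff (k + 1) (q - (liftApprox q k).1 * (liftApprox q k).2)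
    ((liftApprox q k).1 + monomial (k + 1) (S %ₘ constantCoeff q),
      (liftApprox q k).2 + monomial (k + 1) (S /ₘ constantCoeff q))

theorem coeff_liftApprox_fst (q : R[X]⟦X⟧) (i k : ℕ) :
    coeff i (liftApprox q k).1 = if i ≤ k then coeff i (liftApprox q i).1 else 0 :=
  coeff_eq_ite_of_coeff_succ (F := fun k => (liftApprox q k).1) (fun i => by simp [liftApprox])
    (fun k i hi => by simp [liftApprox, coeff_monomial, hi]) i k

theorem coeff_liftApprox_snd (q : R[X]⟦X⟧) (i k : ℕ) :
    coeff i (liftApprox q k).2 = if i ≤ k then coeff i (liftApprox q i).2 else 0 :=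
  coeff_eq_ite_of_coeff_succ (F := fun k => (liftApprox q k).2)
    (fun i => by simp [liftApprox, coeff_one])
    (fun k i hi => by simp [liftApprox, coeff_monomial, hi]) i k

noncomputable def liftFst (q : R[X]⟦X⟧) : R[X]⟦X⟧ :=
  mk fun k => coeff k (liftApprox q k).1

noncomputable def liftSnd (q : R[X]⟦X⟧) : R[X]⟦X⟧ :=
  mk fun k => coeff k (liftApprox q k).2

theorem trunc_liftFst (q : R[X]⟦X⟧) (k : ℕ) :
    (trunc (k + 1) (liftFst q) : R[X]⟦X⟧) = (liftApprox q k).1 := by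
  ext i
  rw [Polynomial.coeff_coe, coeff_trunc, coeff_liftApprox_fst, liftFst, coeff_mk]
  simp only [Nat.lt_succ_iff]

theorem trunc_liftSnd (q : R[X]⟦X⟧) (k : ℕ) :
    (trunc (k + 1) (liftSnd q) : R[X]⟦X⟧) = (liftApprox q k).2 := by
  ext i
  rw [Polynomial.coeff_coe, coeff_trunc, coeff_liftApprox_snd, liftSnd, coeff_mk]
  simp only [Nat.lt_succ_iff]

theorem coeff_succ_liftFst (q : R[X]⟦X⟧) (k : ℕ) :
    coeff (k + 1) (liftFst q)
      = coeff (k + 1) (q - (liftApprox q k).1 * (liftApprox q k).2) %ₘ constantCoeff q := by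
  simp [liftFst, liftApprox, coeff_liftApprox_fst q (k + 1) k]

theorem coeff_succ_liftSnd (q : R[X]⟦X⟧) (k : ℕ) :
    coeff (k + 1) (liftSnd q)
      = coeff (k + 1) (q - (liftApprox q k).1 * (liftApprox q k).2) /ₘ constantCoeff q := by
  simp [liftSnd, liftApprox, coeff_liftApprox_snd q (k + 1) k]

theorem constantCoeff_liftSnd (q : R[X]⟦X⟧) : constantCoeff (liftSnd q) = 1 := by
  simp [liftSnd, liftApprox]

theorem isMonicLift_liftFst {q : R[X]⟦X⟧} (hq : (constantCoeff q).Monic) :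
    IsMonicLift (constantCoeff q) (liftFst q) := by
  refine ⟨by simp [liftFst, liftApprox], fun k => ?_⟩
  nontriviality R
  rw [coeff_succ_liftFst]
  exact (degree_modByMonic_lt _ hq).trans_le degree_le_natDegree

theorem liftFst_mul_liftSnd {q : R[X]⟦X⟧} (hq : (constantCoeff q).Monic) :
    liftFst q * liftSnd q = q := by
  ext1 k
  rcases k with _ | k
  · simp [(isMonicLift_liftFst hq).1, constantCoeff_liftSnd]
  · rw [coeff_succ_mul, coeff_succ_liftFst, coeff_succ_liftSnd, (isMonicLift_liftFst hq).1,
      constantCoeff_liftSnd, trunc_liftFst, trunc_liftSnd, mul_one, modByMonic_add_div, map_sub,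
      sub_add_cancel]

theorem natDegree_coeff_liftSnd_le {q : R[X]⟦X⟧} (hq : (constantCoeff q).Monic) {N : ℕ}
    (hN : ∀ k, (coeff k q).natDegree ≤ N) (k : ℕ) :
    (coeff k (liftSnd q)).natDegree ≤ N - (constantCoeff q).natDegree := by
  set n := (constantCoeff q).natDegree
  have hnN : n ≤ N := by simpa using hN 0
  have hfst : ∀ k i, (coeff i (liftApprox q k).1).natDegree ≤ n := fun k i => by
    rw [← trunc_liftFst, Polynomial.coeff_coe, coeff_trunc]
    split_ifs
    · exact (isMonicLift_liftFst hq).natDegree_coeff_le i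
    · simp
  suffices hsnd : ∀ k i, (coeff i (liftApprox q k).2).natDegree ≤ N - n by
    simpa [liftSnd] using hsnd k k
  intro k
  induction k with
  | zero => intro i; simp [liftApprox, coeff_one, apply_ite natDegree]
  | succ k ih =>
    intro i
    simp only [liftApprox, map_add, coeff_monomial]
    refine (natDegree_add_le _ _).trans (max_le (ih i) ?_)
    split_ifs
    · rw [natDegree_divByMonic _ hq]
      refine Nat.sub_le_sub_right ((natDegree_sub_le _ _).trans (max_le (hN _) ?_)) _
      exact (natDegree_coeff_mul_le (hfst k) ih _).trans (by omega)
    · simp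

end PowerSeries

namespace Polynomial

variable {R : Type*} [CommRing R]

theorem isMonicLift_swapVar {A : R⟦X⟧[X]} (hA : A.Monic) :
    IsMonicLift (A.map PowerSeries.constantCoeff) (swapVar A) := by
  refine ⟨constantCoeff_swapVar A, fun k => ?_⟩
  nontriviality R
  rw [hA.natDegree_map, degree_lt_iff_coeff_zero]
  intro j hj
  rw [coeff_coeff_swapVar]
  rcases hj.eq_or_lt with rfl | hlt
  · rw [hA.coeff_natDegree, PowerSeries.coeff_one, if_neg k.succ_ne_zero]
  · rw [coeff_eq_zero_of_natDegree_lt hlt, map_zero]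

theorem monic_of_isMonicLift_swapVar {g : R[X]} (hg : g.Monic) {A : R⟦X⟧[X]}
    (hA : IsMonicLift g (swapVar A)) (hdeg : A.natDegree ≤ g.natDegree) : A.Monic := by
  refine monic_of_natDegree_le_of_coeff_eq_one _ hdeg (PowerSeries.ext fun k => ?_)
  rw [← coeff_coeff_swapVar, PowerSeries.coeff_one]
  rcases k with _ | k
  · rw [PowerSeries.coeff_zero_eq_constantCoeff_apply, hA.1, hg.coeff_natDegree, if_pos rfl]
  · rw [coeff_eq_zero_of_degree_lt (hA.2 k), if_neg k.succ_ne_zero]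

theorem existsUnique_monic_mul_of_monic_map {Q : R⟦X⟧[X]}
    (hQ : (Q.map PowerSeries.constantCoeff).Monic) :
    ∃! AB : R⟦X⟧[X] × R⟦X⟧[X],
      Q = AB.1 * AB.2 ∧ AB.1.Monic ∧ AB.2.map PowerSeries.constantCoeff = 1 := by
  rw [← constantCoeff_swapVar] at hQ
  have hlift := isMonicLift_liftFst hQ
  obtain ⟨A, hA, hAdeg⟩ := exists_swapVar_eq hlift.natDegree_coeff_le
  obtain ⟨B, hB, -⟩ :=
    exists_swapVar_eq (natDegree_coeff_liftSnd_le hQ (natDegree_coeff_swapVar_le Q))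
  refine ⟨(A, B), ⟨swapVar_injective ?_, monic_of_isMonicLift_swapVar hQ (hA ▸ hlift) hAdeg, ?_⟩,
    ?_⟩
  · rw [map_mul, hA, hB, liftFst_mul_liftSnd hQ]
  · rw [← constantCoeff_swapVar, hB, constantCoeff_liftSnd]
  rintro ⟨A', B'⟩ ⟨hQ', hA', hB'⟩
  have hg : A'.map PowerSeries.constantCoeff = PowerSeries.constantCoeff (swapVar Q) := by
    rw [constantCoeff_swapVar, hQ', Polynomial.map_mul, hB', mul_one]
  obtain ⟨hAA', hBB'⟩ := IsMonicLift.eq_of_mul_eq hQ (hg ▸ isMonicLift_swapVar hA') hlift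
    (by rw [constantCoeff_swapVar, hB']) (by rw [← map_mul, ← hQ', liftFst_mul_liftSnd hQ])
  exact Prod.ext (swapVar_injective (hAA'.trans hA.symm)) (swapVar_injective (hBB'.trans hB.symm))

end Polynomial

/-- Weierstrass-type factorization: if `Q|x=0 ≠ 0` then there are unique
`A, B ∈ K⟦x⟧[y]` with `Q = A·B`, `A` monic, and `B|x=0` a nonzero constant of `K`. -/
theorem affine_factor_exists_unique {K : Type*} [Field K]
    (Q : Polynomial (PowerSeries K)) (h0 : atZero Q ≠ 0) :
    ∃! AB : Polynomial (PowerSeries K) × Polynomial (PowerSeries K),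
      Q = AB.1 * AB.2 ∧ AB.1.Monic ∧
        ∃ c : K, c ≠ 0 ∧ atZero AB.2 = Polynomial.C c := by
  unfold atZero at *
  set c := (Q.map PowerSeries.constantCoeff).leadingCoeff
  have hc : c ≠ 0 := leadingCoeff_ne_zero.2 h0
  have hscale (P : K⟦X⟧[X]) :
      P = Polynomial.C (PowerSeries.C c) * (Polynomial.C (PowerSeries.C c⁻¹) * P) := by
    rw [← mul_assoc, ← Polynomial.C_mul, ← map_mul, mul_inv_cancel₀ hc, map_one, map_one, one_mul]
  have hmonic : ((Polynomial.C (PowerSeries.C c⁻¹) * Q).map PowerSeries.constantCoeff).Monic := by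
    rw [Polynomial.map_mul, Polynomial.map_C, PowerSeries.constantCoeff_C]
    exact monic_C_mul_of_mul_leadingCoeff_eq_one (inv_mul_cancel₀ hc)
  obtain ⟨⟨A, B⟩, ⟨hAB, hA, hB⟩, huniq⟩ := existsUnique_monic_mul_of_monic_map hmonic
  refine ⟨(A, Polynomial.C (PowerSeries.C c) * B), ⟨?_, hA, c, hc, ?_⟩, ?_⟩
  · rw [hscale Q, hAB, mul_left_comm]
  · rw [Polynomial.map_mul, hB, Polynomial.map_C, PowerSeries.constantCoeff_C, mul_one]
  rintro ⟨A', B'⟩ ⟨hQ', hA', c', -, hB'⟩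
  have hc' : c' = c := by
    simp only [c, hQ', Polynomial.map_mul, hB', leadingCoeff_mul, leadingCoeff_C,
      (hA'.map _).leadingCoeff, one_mul]
  have hAB' := huniq (A', Polynomial.C (PowerSeries.C c⁻¹) * B') ⟨by rw [hQ', mul_left_comm], hA',
    by rw [Polynomial.map_mul, hB', Polynomial.map_C, PowerSeries.constantCoeff_C,
      ← Polynomial.C_mul, hc', inv_mul_cancel₀ hc, map_one]⟩
  simp only [Prod.mk.injEq] at hAB' ⊢
  exact ⟨hAB'.1, by rw [hscale B', hAB'.2]⟩
end

section
/- Let d ∈ ℤ_{>0} and let Q, Q' ∈ K⟦x⟧[y] be such that Q|x=0 ≠ 0 and Q ≡ Q' mod x^d (coefficientwise). Then the affine factor of Q and the affine factor of Q' are congruent modulo x^d. -/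
open Polynomial PowerSeries

/-!
Reduce modulo `x^d`: over `S = K⟦x⟧ ⧸ (x^d)` the factors `B`, `B'` become units of `S[y]`, since
their constant coefficients are units and all other coefficients are divisible by `x`, hence
nilpotent. So `A = A' * u` for a unit `u` of `S[y]`; as `A` and `A'` are monic, so is `u`, and a
monic unit is `1`.
-/

namespace Polynomial

variable {R : Type*} [CommRing R]

theorem Monic.eq_of_mul_eq_mul_of_isUnit {A A' B B' : R[X]} (hA : A.Monic) (hA' : A'.Monic)
    (hB : IsUnit B) (hB' : IsUnit B') (h : A * B = A' * B') : A = A' := by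
  obtain ⟨u, rfl⟩ := hB
  obtain ⟨u', rfl⟩ := hB'
  have hAu : A = A' * ↑(u' * u⁻¹) := by
    rw [Units.val_mul, ← mul_assoc, ← h, mul_assoc, Units.mul_inv, mul_one]
  have hu : (↑(u' * u⁻¹) : R[X]).Monic := hA'.of_mul_monic_left (hAu ▸ hA)
  rw [hAu, hu.eq_one_of_isUnit (Units.isUnit _), mul_one]

theorem C_dvd_iff_map_mk_span_eq_zero (a : R) (P : R[X]) :
    C a ∣ P ↔ P.map (Ideal.Quotient.mk (Ideal.span {a})) = 0 := by
  simp only [C_dvd_iff_dvd_coeff, Polynomial.ext_iff, coeff_map, coeff_zero,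
    Ideal.Quotient.eq_zero_iff_mem, Ideal.mem_span_singleton]

theorem isUnit_map_mk_span_pow {ϖ : R} (d : ℕ) {P : R[X]} (h0 : IsUnit (P.coeff 0))
    (h : ∀ i, i ≠ 0 → ϖ ∣ P.coeff i) :
    IsUnit (P.map (Ideal.Quotient.mk (Ideal.span {ϖ ^ d}))) := by
  refine isUnit_iff_coeff_isUnit_isNilpotent.2 ⟨?_, fun i hi => ⟨d, ?_⟩⟩
  · rw [coeff_map]
    exact h0.map _
  · rw [coeff_map, ← map_pow, Ideal.Quotient.eq_zero_iff_mem, Ideal.mem_span_singleton]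
    exact pow_dvd_pow_of_dvd (h i hi) d

end Polynomial

theorem isUnit_map_mk_span_X_pow_of_atZero_eq_C {K : Type*} [Field K]
    {B : Polynomial (PowerSeries K)} {c : K} (hc : c ≠ 0) (hB : atZero B = Polynomial.C c)
    (d : ℕ) :
    IsUnit (B.map (Ideal.Quotient.mk (Ideal.span {(PowerSeries.X : PowerSeries K) ^ d}))) := by
  have hcoeff (i : ℕ) : constantCoeff (B.coeff i) = (Polynomial.C c).coeff i := by
    rw [← hB, atZero, Polynomial.coeff_map]
  refine isUnit_map_mk_span_pow d ?_ fun i hi => ?_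
  · rw [isUnit_iff_constantCoeff, hcoeff, Polynomial.coeff_C_zero]
    exact hc.isUnit
  · rw [PowerSeries.X_dvd_iff, hcoeff, Polynomial.coeff_C_of_ne_zero hi]

theorem affine_factor_congruent_general {K : Type*} [Field K]
    (d : ℕ)
    (Q Q' A B A' B' : Polynomial (PowerSeries K))
    (hcong : Polynomial.C ((PowerSeries.X : PowerSeries K) ^ d) ∣ (Q - Q'))
    (hQ : Q = A * B) (hA : A.Monic)
    (hB : ∃ c : K, c ≠ 0 ∧ atZero B = Polynomial.C c)
    (hQ' : Q' = A' * B') (hA' : A'.Monic)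
    (hB' : ∃ c : K, c ≠ 0 ∧ atZero B' = Polynomial.C c) :
    Polynomial.C ((PowerSeries.X : PowerSeries K) ^ d) ∣ (A - A') := by
  obtain ⟨c, hc, hBc⟩ := hB
  obtain ⟨c', hc', hBc'⟩ := hB'
  rw [C_dvd_iff_map_mk_span_eq_zero, Polynomial.map_sub, sub_eq_zero] at hcong ⊢
  refine (hA.map _).eq_of_mul_eq_mul_of_isUnit (hA'.map _)
    (isUnit_map_mk_span_X_pow_of_atZero_eq_C hc hBc d)
    (isUnit_map_mk_span_X_pow_of_atZero_eq_C hc' hBc' d) ?_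
  rw [← Polynomial.map_mul, ← Polynomial.map_mul, ← hQ, ← hQ', hcong]

/-- if `Q ≡ Q' mod x^d` then the affine factors of `Q` and `Q'` are
congruent modulo `x^d`. -/
theorem affine_factor_congruent {K : Type*} [Field K]
    (d : ℕ) (hd : 0 < d)
    (Q Q' A B A' B' : Polynomial (PowerSeries K))
    (h0 : atZero Q ≠ 0) (h0' : atZero Q' ≠ 0)
    (hcong : Polynomial.C ((PowerSeries.X : PowerSeries K) ^ d) ∣ (Q - Q'))
    (hQ : Q = A * B) (hA : A.Monic)
    (hB : ∃ c : K, c ≠ 0 ∧ atZero B = Polynomial.C c)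
    (hQ' : Q' = A' * B') (hA' : A'.Monic)
    (hB' : ∃ c : K, c ≠ 0 ∧ atZero B' = Polynomial.C c) :
    Polynomial.C ((PowerSeries.X : PowerSeries K) ^ d) ∣ (A - A') :=
  affine_factor_congruent_general d Q Q' A B A' B' hcong hQ hA hB hQ' hA' hB'
end

section
/- Let R be a commutative ring, let Q ∈ R[y], let A = Σ_{0≤j≤δ} a_j y^j ∈ R[y] be monic of degree δ (so a_δ = 1), and let f, r ∈ R. Define Ā = Σ_{0≤j≤δ} r^{δ−j} a_j y^j and Â = Ā(y − f). Then Â is monic of degree δ, Â(f + r·y) = r^δ · A(y), and the remainder of Q(f + r·y) upon division by A equals R̂(f + r·y), where R̂ is the remainder of Q upon division by Â. -/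
open Polynomial PowerSeries

/-! `Ā` is `A.scaleRoots r`, so `Ā(r·y) = r^δ·A(y)` and hence `Â(f + r·y) = r^δ·A(y)`; in particular
`A` divides `Â(f + r·y)`. Composition with `f + r·y` is a ring endomorphism of `R[y]` that does not
raise degrees, so it turns `Q ≡ Q rem Â (mod Â)` into a congruence modulo `A` whose right-hand side
already has degree `< δ`. -/

namespace Polynomial

variable {R : Type*} [CommRing R]

lemma natDegree_comp_X_sub_C (p : R[X]) (a : R) : (p.comp (X - C a)).natDegree = p.natDegree := by
  rw [sub_eq_add_neg, ← C_neg, ← taylor_apply, natDegree_taylor]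

lemma scaleRoots_eq_sum (p : R[X]) (s : R) :
    p.scaleRoots s =
      ∑ j ∈ Finset.range (p.natDegree + 1), C (s ^ (p.natDegree - j) * p.coeff j) * X ^ j := by
  conv_lhs => rw [as_sum_range_C_mul_X_pow (p.scaleRoots s), natDegree_scaleRoots]
  simp only [coeff_scaleRoots, mul_comm]

lemma scaleRoots_comp_C_mul_X (p : R[X]) (s : R) :
    (p.scaleRoots s).comp (C s * X) = C (s ^ p.natDegree) * p := by
  simpa [comp, C_pow] using scaleRoots_eval₂_mul (C : R →+* R[X]) X s (p := p)

lemma scaleRoots_comp_X_sub_C_comp (p : R[X]) (s a : R) :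
    ((p.scaleRoots s).comp (X - C a)).comp (C a + C s * X) = C (s ^ p.natDegree) * p := by
  have hshift : (X - C a).comp (C a + C s * X) = C s * X := by simp
  rw [comp_assoc, hshift, scaleRoots_comp_C_mul_X]

lemma degree_comp_le_of_natDegree_le_one {p q : R[X]} (hq : q.natDegree ≤ 1) :
    (p.comp q).degree ≤ p.degree := by
  rcases eq_or_ne p 0 with rfl | hp
  · simp
  rw [degree_eq_natDegree hp]
  exact degree_le_of_natDegree_le <|
    natDegree_comp_le.trans ((Nat.mul_le_mul_left _ hq).trans_eq (mul_one _))

lemma comp_modByMonic_of_dvd_comp {A M σ : R[X]} (hA : A.Monic) (hM : M.Monic)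
    (hdeg : M.natDegree = A.natDegree) (hσ : σ.natDegree ≤ 1) (hdvd : A ∣ M.comp σ) (Q : R[X]) :
    (Q.comp σ) %ₘ A = (Q %ₘ M).comp σ := by
  nontriviality R
  have hlt : ((Q %ₘ M).comp σ).degree < A.degree :=
    calc ((Q %ₘ M).comp σ).degree ≤ (Q %ₘ M).degree := degree_comp_le_of_natDegree_le_one hσ
      _ < M.degree := degree_modByMonic_lt Q hM
      _ = A.degree := by rw [degree_eq_natDegree hM.ne_zero, degree_eq_natDegree hA.ne_zero, hdeg]
  rw [← (modByMonic_eq_self_iff hA).2 hlt]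
  refine modByMonic_eq_of_dvd_sub hA (hdvd.trans ?_)
  obtain ⟨k, hk⟩ := dvd_modByMonic_sub Q M
  exact ⟨-k.comp σ, by rw [← neg_sub, ← sub_comp, hk, mul_comp, mul_neg]⟩

end Polynomial

/-- shifted remainders. With `A` monic of degree `δ`,
`Ā = Σ_j r^{δ-j} a_j y^j` and `Â = Ā(y - f)`, the polynomial `Â` is monic of degree `δ`,
`Â(f + r·y) = r^δ·A`, and `Q(f + r·y) rem A = (Q rem Â)(f + r·y)`. -/
theorem shifted_remainder {R : Type*} [CommRing R]
    (Q A : Polynomial R) (hA : A.Monic) (δ : ℕ) (hδ : A.natDegree = δ)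
    (f r : R) (Abar Ahat : Polynomial R)
    (hAbar : Abar = ∑ j ∈ Finset.range (δ + 1),
      Polynomial.C (r ^ (δ - j) * A.coeff j) * Polynomial.X ^ j)
    (hAhat : Ahat = Abar.comp (Polynomial.X - Polynomial.C f)) :
    Ahat.Monic ∧ Ahat.natDegree = δ ∧
    Ahat.comp (Polynomial.C f + Polynomial.C r * Polynomial.X) = Polynomial.C (r ^ δ) * A ∧
    (Q.comp (Polynomial.C f + Polynomial.C r * Polynomial.X)) %ₘ A
      = (Q %ₘ Ahat).comp (Polynomial.C f + Polynomial.C r * Polynomial.X) := by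
  subst hδ
  rw [← scaleRoots_eq_sum] at hAbar
  subst hAbar
  have hmonic : Ahat.Monic := hAhat ▸ ((monic_scaleRoots_iff r).2 hA).comp_X_sub_C f
  have hdeg : Ahat.natDegree = A.natDegree := by
    rw [hAhat, natDegree_comp_X_sub_C, natDegree_scaleRoots]
  have hcomp := hAhat ▸ scaleRoots_comp_X_sub_C_comp A r f
  have hlinear : (Polynomial.C f + Polynomial.C r * Polynomial.X).natDegree ≤ 1 :=
    add_comm (Polynomial.C f) _ ▸ natDegree_linear_le
  exact ⟨hmonic, hdeg, hcomp,
    comp_modByMonic_of_dvd_comp hA hmonic hdeg hlinear (hcomp ▸ dvd_mul_left A _) Q⟩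
end

section
/- Let Q ∈ K⟦x⟧[y] with Q|x=0 ≠ 0, and write Q = A·B with A monic and B|x=0 a nonzero constant of K. Then for every f ∈ K[x] and t ∈ ℕ, the polynomials Q(f + x^t y) and A(f + x^t y) have the same x-valuation s, and Q(f + x^t y)/x^s and A(f + x^t y)/x^s differ by multiplication by a polynomial whose image under x = 0 is a nonzero constant; consequently, for f nonzero and t ≥ 1, the root multiplicity of (f,t) in Q equals the root multiplicity of (f,t) in A. -/
open Polynomial PowerSeries

/-!
`x` is a nonunit of the factorial ring `K⟦x⟧[y]` and `P|x=0 = 0` exactly when `x ∣ P`, so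
every nonzero `P` is uniquely `x^s · R` with `R|x=0 ≠ 0`. Substitution is multiplicative, hence
`Q(f + x^t y) = A(f + x^t y) · B(f + x^t y)`, and `B(f + x^t y)|x=0 = B|x=0` is a nonzero constant:
the normal form of `Q(f + x^t y)` is that of `A(f + x^t y)` times `B(f + x^t y)`, and at `x = 0`
the two differ by a nonzero constant factor, which does not change root multiplicities.
-/

theorem pow_mul_eq_pow_mul_of_not_dvd {α : Type*} [CommMonoidWithZero α] [IsCancelMulZero α]
    {a b c : α} {m n : ℕ} (ha : a ≠ 0) (hb : ¬a ∣ b) (hc : ¬a ∣ c)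
    (h : a ^ m * b = a ^ n * c) :
    m = n ∧ b = c := by
  wlog hmn : m ≤ n generalizing m n b c
  · obtain ⟨h₁, h₂⟩ := this hc hb h.symm (by omega)
    exact ⟨h₁.symm, h₂.symm⟩
  obtain ⟨k, rfl⟩ := Nat.exists_eq_add_of_le hmn
  rw [pow_add, mul_assoc] at h
  have hbc : b = a ^ k * c := mul_left_cancel₀ (pow_ne_zero m ha) h
  rcases k with _ | k
  · simpa using hbc
  · exact absurd ⟨a ^ k * c, by rw [hbc, pow_succ', mul_assoc]⟩ hb

section

variable {K : Type*} [Field K]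

theorem atZero_mul (P R : Polynomial (PowerSeries K)) : atZero (P * R) = atZero P * atZero R :=
  Polynomial.map_mul _

theorem atZero_eq_zero_iff {P : Polynomial (PowerSeries K)} :
    atZero P = 0 ↔ Polynomial.C PowerSeries.X ∣ P := by
  simp [atZero, Polynomial.ext_iff, Polynomial.C_dvd_iff_dvd_coeff, PowerSeries.X_dvd_iff]

theorem exists_eq_C_X_pow_mul {P : Polynomial (PowerSeries K)} (hP : P ≠ 0) :
    ∃ (s : ℕ) (R : Polynomial (PowerSeries K)),
      P = Polynomial.C (PowerSeries.X ^ s) * R ∧ atZero R ≠ 0 := by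
  have hX : ¬IsUnit (Polynomial.C (PowerSeries.X : PowerSeries K)) :=
    Polynomial.isUnit_C.not.2 PowerSeries.X_prime.not_isUnit
  obtain ⟨s, R, hR, rfl⟩ := WfDvdMonoid.max_power_factor' hP hX
  exact ⟨s, R, by rw [Polynomial.C_pow], by rwa [Ne, atZero_eq_zero_iff]⟩

theorem eq_of_C_X_pow_mul_eq {s s' : ℕ} {R R' : Polynomial (PowerSeries K)}
    (h : Polynomial.C (PowerSeries.X ^ s) * R = Polynomial.C (PowerSeries.X ^ s') * R')
    (hR : atZero R ≠ 0) (hR' : atZero R' ≠ 0) : s = s' ∧ R = R' := by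
  rw [Polynomial.C_pow, Polynomial.C_pow] at h
  rw [Ne, atZero_eq_zero_iff] at hR hR'
  exact pow_mul_eq_pow_mul_of_not_dvd (Polynomial.C_ne_zero.2 PowerSeries.X_ne_zero) hR hR' h

theorem exists_eq_C_X_pow_mul_and_iff {P R₀ : Polynomial (PowerSeries K)} {s₀ : ℕ}
    (h₀ : P = Polynomial.C (PowerSeries.X ^ s₀) * R₀) (hR₀ : atZero R₀ ≠ 0)
    (p : K[X] → Prop) :
    (∃ (s : ℕ) (R : Polynomial (PowerSeries K)),
      P = Polynomial.C (PowerSeries.X ^ s) * R ∧ atZero R ≠ 0 ∧ p (atZero R)) ↔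
    p (atZero R₀) := by
  refine ⟨?_, fun hp => ⟨s₀, R₀, h₀, hR₀, hp⟩⟩
  rintro ⟨s, R, h, hR, hp⟩
  rwa [(eq_of_C_X_pow_mul_eq (h.symm.trans h₀) hR hR₀).2] at hp

theorem shift_mul (P R : Polynomial (PowerSeries K)) (f : PowerSeries K) (t : ℕ) :
    shift (P * R) f t = shift P f t * shift R f t :=
  Polynomial.mul_comp _ _ _

theorem shift_ne_zero {P : Polynomial (PowerSeries K)} (hP : P ≠ 0) (f : PowerSeries K)
    (t : ℕ) :
    shift P f t ≠ 0 := by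
  rw [shift, Ne, Polynomial.comp_eq_zero_iff]
  rintro (h | ⟨-, h⟩)
  · exact hP h
  · have h₁ := congrArg (Polynomial.coeff · 1) h
    simp only [Polynomial.coeff_add, Polynomial.coeff_C_mul_X, Polynomial.coeff_C] at h₁
    simp [PowerSeries.X_ne_zero] at h₁

theorem atZero_shift_of_eq_C {P : Polynomial (PowerSeries K)} {c : K}
    (hP : atZero P = Polynomial.C c) (f : PowerSeries K) (t : ℕ) :
    atZero (shift P f t) = Polynomial.C c := by
  rw [atZero, shift, Polynomial.map_comp, ← atZero, hP, Polynomial.C_comp]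

theorem hasRootMultiplicity_mul_iff {A B : Polynomial (PowerSeries K)} (hA : A ≠ 0) {c : K}
    (hc : c ≠ 0) (hB : atZero B = Polynomial.C c) (f : K[X]) (t m : ℕ) :
    HasRootMultiplicity (A * B) f t m ↔ HasRootMultiplicity A f t m := by
  simp only [HasRootMultiplicity, exists_and_left]
  refine exists_congr fun g => exists_congr fun a => and_congr_right' <| and_congr_right' ?_
  obtain ⟨s, R, hAR, hR⟩ := exists_eq_C_X_pow_mul (shift_ne_zero hA (g : PowerSeries K) (t - 1))
  have hRB : atZero (R * shift B g (t - 1)) = atZero R * Polynomial.C c := by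
    rw [atZero_mul, atZero_shift_of_eq_C hB]
  have hC : (Polynomial.C c : K[X]) ≠ 0 := Polynomial.C_ne_zero.2 hc
  rw [exists_eq_C_X_pow_mul_and_iff (by rw [shift_mul, hAR, mul_assoc])
      (by rw [hRB]; exact mul_ne_zero hR hC) fun r => m = r.rootMultiplicity a,
    exists_eq_C_X_pow_mul_and_iff hAR hR fun r => m = r.rootMultiplicity a, hRB,
    rootMultiplicity_mul (mul_ne_zero hR hC), rootMultiplicity_C, add_zero]

end

theorem shift_valuation_and_multiplicity_affine_factor_general {K : Type*} [Field K]
    (Q A B : Polynomial (PowerSeries K))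
    (hQ : Q = A * B) (hA : A.Monic)
    (hB : ∃ c : K, c ≠ 0 ∧ atZero B = Polynomial.C c)
    (f : Polynomial K) (t : ℕ) :
    (∃ (s : ℕ) (Qs As U : Polynomial (PowerSeries K)),
      shift Q ((f : Polynomial K) : PowerSeries K) t
        = Polynomial.C ((PowerSeries.X : PowerSeries K) ^ s) * Qs ∧ atZero Qs ≠ 0 ∧
      shift A ((f : Polynomial K) : PowerSeries K) t
        = Polynomial.C ((PowerSeries.X : PowerSeries K) ^ s) * As ∧ atZero As ≠ 0 ∧
      Qs = As * U ∧ ∃ c : K, c ≠ 0 ∧ atZero U = Polynomial.C c) ∧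
    (f ≠ 0 → 1 ≤ t → ∀ m : ℕ, HasRootMultiplicity Q f t m ↔ HasRootMultiplicity A f t m) := by
  obtain ⟨c, hc, hBc⟩ := hB
  subst hQ
  have hU := atZero_shift_of_eq_C hBc (f : PowerSeries K) t
  obtain ⟨s, As, hAs, hAs0⟩ :=
    exists_eq_C_X_pow_mul (shift_ne_zero hA.ne_zero (f : PowerSeries K) t)
  refine ⟨⟨s, As * shift B f t, As, shift B f t, by rw [shift_mul, hAs, mul_assoc], ?_,
    hAs, hAs0, rfl, c, hc, hU⟩, fun _ _ => hasRootMultiplicity_mul_iff hA.ne_zero hc hBc f t⟩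
  rw [atZero_mul, hU]
  exact mul_ne_zero hAs0 (Polynomial.C_ne_zero.2 hc)

/-- with `Q = A·B` as usual, for every `f ∈ K[x]` and `t ∈ ℕ` the
polynomials `Q(f + x^t y)` and `A(f + x^t y)` have the same `x`-valuation `s`, their
quotients by `x^s` differ by a factor whose image at `x = 0` is a nonzero constant,
and for nonzero `f` and `t ≥ 1` the root multiplicities of `(f,t)` in `Q` and `A`
coincide. -/
theorem shift_valuation_and_multiplicity_affine_factor {K : Type*} [Field K]
    (Q A B : Polynomial (PowerSeries K)) (h0 : atZero Q ≠ 0)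
    (hQ : Q = A * B) (hA : A.Monic)
    (hB : ∃ c : K, c ≠ 0 ∧ atZero B = Polynomial.C c)
    (f : Polynomial K) (t : ℕ) :
    (∃ (s : ℕ) (Qs As U : Polynomial (PowerSeries K)),
      shift Q ((f : Polynomial K) : PowerSeries K) t
        = Polynomial.C ((PowerSeries.X : PowerSeries K) ^ s) * Qs ∧ atZero Qs ≠ 0 ∧
      shift A ((f : Polynomial K) : PowerSeries K) t
        = Polynomial.C ((PowerSeries.X : PowerSeries K) ^ s) * As ∧ atZero As ≠ 0 ∧
      Qs = As * U ∧ ∃ c : K, c ≠ 0 ∧ atZero U = Polynomial.C c) ∧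
    (f ≠ 0 → 1 ≤ t → ∀ m : ℕ, HasRootMultiplicity Q f t m ↔ HasRootMultiplicity A f t m) :=
  shift_valuation_and_multiplicity_affine_factor_general Q A B hQ hA hB f t
end

section
/- Let f_1, …, f_n ∈ K⟦x⟧ be such that f_i − f_j is a unit of K⟦x⟧ for all i ≠ j, and let Q = (y − f_1)·…·(y − f_n) ∈ K⟦x⟧[y]. Then for every d ∈ ℤ_{>0}, roots(Q, d) = ∪_{1≤i≤n} (f_i + x^d K⟦x⟧); that is, the roots of Q to precision d are exactly the power series congruent to some f_i modulo x^d. -/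
/-!
In the local ring `K⟦x⟧` at most one of the factors `g - f i` of `Q(g)` is a nonunit: if `g - f i`
and `g - f j` both were, so would be their difference `f j - f i`. Hence `Q(g)` is a unit times
that one factor (or a unit), and `x^d` divides `Q(g)` exactly when it divides `g - f i` for some `i`.
-/

open Polynomial PowerSeries

section IsLocalRing

variable {R : Type*} [CommRing R] [IsLocalRing R]

theorem isUnit_sub_of_not_isUnit_sub {g a b : R} (hga : ¬IsUnit (g - a)) (hab : IsUnit (a - b)) :
    IsUnit (g - b) := by
  by_contra hgb
  have hsum : (g - b) + -(g - a) ∈ nonunits R :=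
    IsLocalRing.nonunits_add hgb (by simpa only [mem_nonunits_iff, IsUnit.neg_iff] using hga)
  exact hsum (by rwa [show (g - b) + -(g - a) = a - b by ring])

theorem dvd_prod_sub_iff_exists_dvd_sub {ι : Type*} [Fintype ι] {f : ι → R}
    (hf : Pairwise fun i j => IsUnit (f i - f j)) {a : R} (ha : ¬IsUnit a) (g : R) :
    a ∣ ∏ i, (g - f i) ↔ ∃ i, a ∣ g - f i := by
  classical
  refine ⟨fun hdvd => ?_, fun ⟨i, hi⟩ => hi.trans (Finset.dvd_prod_of_mem _ (Finset.mem_univ i))⟩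
  by_cases hall : ∀ i, IsUnit (g - f i)
  · exact absurd (isUnit_of_dvd_unit hdvd (IsUnit.prod_univ_iff.mpr hall)) ha
  push Not at hall
  obtain ⟨i, hi⟩ := hall
  have hrest : IsUnit (∏ j ∈ Finset.univ.erase i, (g - f j)) :=
    IsUnit.prod_iff.mpr fun j hj =>
      isUnit_sub_of_not_isUnit_sub hi (hf (Finset.ne_of_mem_erase hj).symm)
  rw [← Finset.mul_prod_erase _ _ (Finset.mem_univ i)] at hdvd
  exact ⟨i, hrest.dvd_mul_right.mp hdvd⟩

end IsLocalRing

/-- if `Q = (y - f_1)⋯(y - f_n)` with `f_i - f_j` a unit for `i ≠ j`,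
then for every `d > 0`, `roots(Q, d) = ∪_i (f_i + x^d K⟦x⟧)`. -/
theorem roots_of_split_polynomial {K : Type*} [Field K]
    (n : ℕ) (f : Fin n → PowerSeries K)
    (hunit : ∀ i j, i ≠ j → IsUnit (f i - f j))
    (Q : Polynomial (PowerSeries K))
    (hQ : Q = ∏ i, (Polynomial.X - Polynomial.C (f i)))
    (d : ℕ) (hd : 0 < d) :
    seriesRoots Q (d : ℤ) =
      ⋃ i, {g | ∃ h : PowerSeries K, g = f i + (PowerSeries.X : PowerSeries K) ^ d * h} := by
  subst hQ
  have hXd : ¬IsUnit ((PowerSeries.X : PowerSeries K) ^ d) := by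
    rw [isUnit_pow_iff hd.ne']
    exact PowerSeries.X_prime.not_isUnit
  ext g
  simp only [seriesRoots, Set.mem_ofPred_eq, Set.mem_iUnion, Int.toNat_natCast, Nat.cast_pos, hd,
    true_imp_iff, eval_prod, eval_sub, eval_X, eval_C]
  rw [dvd_prod_sub_iff_exists_dvd_sub hunit hXd]
  simp only [Dvd.dvd, sub_eq_iff_eq_add']
end
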